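/- arXiv:2206.07824 — 3 statements merged into one kernel-verified Lean document; each statement's English description precedes it below -/
import Mathlib

section
/- For fixed m ≥ 1 and all d ≥ m, the ratio of the number of DAGs arising as half-squares of acyclic factor graphs with m factors on d variables to the total number of DAGs on d labeled vertices is at most exp(dm + 4d·log(m+d) − (log 2 / 2)·d²); consequently this ratio tends to 0 as d → ∞. -/
open Filter

/-- A directed graph (given as a relation) is acyclic iff no vertex reaches itself by a
nonempty directed path. -/
def IsAcyclicRel {α : Type*} (R : α → α → Prop) : Prop :=
  ∀ x, ¬ Relation.TransGen R x x

/-- The number of DAGs on `d` labeled vertices. -/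
noncomputable def numDAGs (d : ℕ) : ℕ :=
  Nat.card {G : Fin d → Fin d → Bool // IsAcyclicRel (fun a b => G a b = true)}

/-- The number of graphs on `d` labeled vertices arising as half-squares (over the
variable nodes) of acyclic factor directed graphs with `m` factor nodes. -/
noncomputable def numHalfSquareDAGs (d m : ℕ) : ℕ :=
  Nat.card {G : Fin d → Fin d → Bool //
    ∃ (U : Fin d → Fin m → Bool) (V : Fin m → Fin d → Bool),
      (∀ i j, G i j = true ↔ ∃ k, U i k = true ∧ V k j = true) ∧
      IsAcyclicRel (fun x y : Fin d ⊕ Fin m =>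
        match x, y with
        | Sum.inl v, Sum.inr f => U v f = true
        | Sum.inr f, Sum.inl v => V f v = true
        | _, _ => False)}

/-!
Acyclicity means the `d + m` nodes of a factor graph carry a potential into `Fin (d + m)`
that increases along every edge. Given the potential, the factor graph is recovered from its
underlying undirected variable–factor incidences, each of which the potential orients; so there
are at most `(d + m) ^ (d + m) * 2 ^ (d * m)` acyclic factor graphs, hence at most as many
half-squares. On the other hand, every graph whose edges go from smaller to larger labels is a
DAG, so there are at least `2 ^ (d choose 2)` DAGs. The quotient of these bounds is
`exp (O (d log d + d m) - (log 2 / 2) d²)`.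
-/

variable {α β γ : Type*}

theorem IsAcyclicRel.mono {r s : α → α → Prop} (h : r ≤ s) (hs : IsAcyclicRel s) :
    IsAcyclicRel r :=
  fun x hx => hs x (Relation.TransGen.mono h x x hx)

theorem IsAcyclicRel.of_lt [Preorder β] {R : α → α → Prop} (f : α → β)
    (h : ∀ x y, R x y → f x < f y) : IsAcyclicRel R := fun x hx =>
  lt_irrefl (f x) <| by
    simpa only [Relation.transGen_eq_self] using Relation.TransGen.lift (p := (· < ·)) f h x x hx

/-- The potential is the number of strict ancestors. -/
theorem IsAcyclicRel.exists_lt_fin_card [Fintype α] {R : α → α → Prop} (hR : IsAcyclicRel R) :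
    ∃ f : α → Fin (Fintype.card α), ∀ x y, R x y → f x < f y := by
  classical
  let ancestors (x : α) : Finset α := {y | Relation.TransGen R y x}
  refine ⟨fun x => ⟨(ancestors x).card, Finset.card_lt_univ_of_notMem (x := x) ?_⟩, ?_⟩
  · simpa [ancestors] using hR x
  · intro x y hxy
    refine Finset.card_lt_card ((Finset.ssubset_iff_of_subset ?_).2 ⟨x, ?_, ?_⟩)
    · intro z hz
      simp only [ancestors, Finset.mem_filter, Finset.mem_univ, true_and] at hz ⊢
      exact hz.tail hxy
    · simpa [ancestors] using Relation.TransGen.single hxy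
    · simpa [ancestors] using hR x

def factorGraph (U : α → β → Bool) (V : β → α → Bool) : α ⊕ β → α ⊕ β → Prop
  | Sum.inl v, Sum.inr f => U v f = true
  | Sum.inr f, Sum.inl v => V f v = true
  | _, _ => False

theorem Bool.or_and_decide_lt_eq_left [Preorder γ] [DecidableLT γ] {b₁ b₂ : Bool} {x y : γ}
    (h₁ : b₁ = true → x < y) (h₂ : b₂ = true → y < x) :
    ((b₁ || b₂) && decide (x < y)) = b₁ := by
  cases b₁ <;> cases b₂ <;> simp_all [lt_asymm]

theorem IsAcyclicRel.factorGraph_orient [Preorder γ] [DecidableLT γ] (p : α ⊕ β → γ)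
    (E : α → β → Bool) :
    IsAcyclicRel (factorGraph (fun a b => E a b && decide (p (.inl a) < p (.inr b)))
      (fun b a => E a b && decide (p (.inr b) < p (.inl a)))) :=
  IsAcyclicRel.of_lt p <| by rintro (a | b) (a' | b') h <;> simp_all [factorGraph]

theorem card_acyclic_factorGraph_le [Fintype α] [Fintype β] :
    Nat.card {UV : (α → β → Bool) × (β → α → Bool) // IsAcyclicRel (factorGraph UV.1 UV.2)} ≤
      (Fintype.card α + Fintype.card β) ^ (Fintype.card α + Fintype.card β) *
        2 ^ (Fintype.card α * Fintype.card β) := by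
  let orient (pE : (α ⊕ β → Fin (Fintype.card (α ⊕ β))) × (α → β → Bool)) :
      {UV : (α → β → Bool) × (β → α → Bool) // IsAcyclicRel (factorGraph UV.1 UV.2)} :=
    ⟨(fun a b => pE.2 a b && decide (pE.1 (.inl a) < pE.1 (.inr b)),
      fun b a => pE.2 a b && decide (pE.1 (.inr b) < pE.1 (.inl a))),
      IsAcyclicRel.factorGraph_orient pE.1 pE.2⟩
  have orient_surjective : Function.Surjective orient := by
    rintro ⟨⟨U, V⟩, hUV⟩
    obtain ⟨p, hp⟩ := hUV.exists_lt_fin_card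
    refine ⟨(p, fun a b => U a b || V b a), ?_⟩
    refine Subtype.ext (Prod.ext (funext₂ fun a b => ?_) (funext₂ fun b a => ?_))
    · exact Bool.or_and_decide_lt_eq_left (hp (.inl a) (.inr b)) (hp (.inr b) (.inl a))
    · change ((U a b || V b a) && _) = V b a
      rw [Bool.or_comm]
      exact Bool.or_and_decide_lt_eq_left (hp (.inr b) (.inl a)) (hp (.inl a) (.inr b))
  calc _ ≤ Nat.card ((α ⊕ β → Fin (Fintype.card (α ⊕ β))) × (α → β → Bool)) :=
        Nat.card_le_card_of_surjective orient orient_surjective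
    _ = _ := by simp [Nat.card_fun, ← pow_mul, mul_comm]

theorem numHalfSquareDAGs_le (d m : ℕ) :
    numHalfSquareDAGs d m ≤ (d + m) ^ (d + m) * 2 ^ (d * m) := by
  have card_acyclic := card_acyclic_factorGraph_le (α := Fin d) (β := Fin m)
  simp only [Fintype.card_fin] at card_acyclic
  -- `numHalfSquareDAGs` spells out `factorGraph` with its own `match`, which the elaborator
  -- does not unfold to ours; the two relations are identified case by case.
  refine le_trans (Nat.card_le_card_of_surjective
    (fun UV : {UV : (Fin d → Fin m → Bool) × _ // IsAcyclicRel (factorGraph UV.1 UV.2)} =>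
      ⟨fun i j => decide (∃ k, UV.1.1 i k = true ∧ UV.1.2 k j = true), UV.1.1, UV.1.2, by simp,
        UV.2.mono fun x y h => by cases x <;> cases y <;> exact h⟩) ?_) card_acyclic
  rintro ⟨G, U, V, hG, hUV⟩
  refine ⟨⟨(U, V), hUV.mono fun x y h => by cases x <;> cases y <;> exact h⟩, ?_⟩
  ext i j
  exact Bool.eq_iff_iff.2 (by simp [hG])

theorem card_pi_fin_bool_eq_two_pow_choose (d : ℕ) :
    Fintype.card ((j : Fin d) → Fin j → Bool) = 2 ^ d.choose 2 := by
  simp [Fintype.card_pi, Finset.prod_pow_eq_pow_sum, Fin.sum_univ_eq_sum_range (fun i => i),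
    Finset.sum_range_id, Nat.choose_two_right]

theorem two_pow_choose_two_le_numDAGs (d : ℕ) : 2 ^ d.choose 2 ≤ numDAGs d := by
  let toDAG (f : (j : Fin d) → Fin j → Bool) :
      {G : Fin d → Fin d → Bool // IsAcyclicRel (fun a b => G a b = true)} :=
    ⟨fun i j => if h : (i : ℕ) < j then f j ⟨i, h⟩ else false,
      IsAcyclicRel.of_lt Fin.val fun i j hij => by by_contra h; simp [h] at hij⟩
  have toDAG_injective : Function.Injective toDAG := by
    intro f g hfg
    funext j i
    simpa [toDAG] using congr_fun₂ (congrArg Subtype.val hfg) ⟨i, i.2.trans j.2⟩ j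
  rw [← card_pi_fin_bool_eq_two_pow_choose, ← Nat.card_eq_fintype_card]
  exact Nat.card_le_card_of_injective toDAG toDAG_injective

theorem pow_mul_two_pow_div_two_pow_choose_le_exp {d m : ℕ} (hm : 1 ≤ m) (hd : m ≤ d) :
    ((d + m : ℝ) ^ (d + m) * 2 ^ (d * m)) / 2 ^ d.choose 2 ≤
      Real.exp (d * m + 4 * d * Real.log (m + d) - Real.log 2 / 2 * d ^ 2) := by
  have two_le : (2 : ℝ) ≤ m + d := by norm_cast; omega
  rw [← Real.log_le_iff_le_exp (by positivity), Real.log_div (by positivity) (by positivity),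
    Real.log_mul (by positivity) (by positivity), Real.log_pow, Real.log_pow, Real.log_pow,
    Nat.cast_choose_two, add_comm (d : ℝ) m]
  push_cast
  have log_two_pos : 0 < Real.log 2 := Real.log_pos one_lt_two
  have log_two_le : Real.log 2 ≤ Real.log (m + d) := Real.log_le_log two_pos two_le
  have log_two_le_one : Real.log 2 ≤ 1 := (Real.log_le_sub_one_of_pos two_pos).trans (by norm_num)
  have hdm : (d + m : ℝ) ≤ 2 * d := by norm_cast; omega
  linarith [mul_le_mul_of_nonneg_right hdm (log_two_pos.le.trans log_two_le),
    mul_le_mul_of_nonneg_left log_two_le_one (by positivity : (0 : ℝ) ≤ d * m),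
    mul_le_mul_of_nonneg_left log_two_le (by positivity : (0 : ℝ) ≤ d),
    mul_nonneg (Nat.cast_nonneg d) log_two_pos.le]

theorem tendsto_mul_add_mul_log_sub_sq_atBot (a b : ℝ) {c : ℝ} (hc : 0 < c) :
    Tendsto (fun x : ℝ => x * a + b * x * Real.log (a + x) - c * x ^ 2) atTop atBot := by
  have log_div : Tendsto (fun x : ℝ => Real.log (a + x) / x) atTop (nhds 0) :=
    ((Real.tendsto_pow_log_div_mul_add_atTop 1 (-a) 1 one_ne_zero).comp
      (tendsto_atTop_add_const_left atTop a tendsto_id)).congr fun x => by simp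
  have coeff :
      Tendsto (fun x : ℝ => a / x + b * (Real.log (a + x) / x) - c) atTop (nhds (-c)) := by
    simpa using ((tendsto_const_nhds.div_atTop tendsto_id).add (log_div.const_mul b)).sub_const c
  refine ((tendsto_pow_atTop two_ne_zero).atTop_mul_neg (neg_neg_of_pos hc) coeff).congr' ?_
  filter_upwards [eventually_gt_atTop 0] with x hx
  field_simp

/-- For fixed `m ≥ 1` and all `d ≥ m`, the ratio of the number of half-squares of acyclic
factor graphs with `m` factors on `d` variables to the total number of DAGs on `d` labeled
vertices is at most `exp(dm + 4d·log(m+d) − (log 2 / 2)·d²)`; consequently the ratio tends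
to `0` as `d → ∞`. -/
theorem ratio_halfSquareDAGs_le {m : ℕ} (hm : 1 ≤ m) :
    (∀ d : ℕ, m ≤ d →
      (numHalfSquareDAGs d m : ℝ) / numDAGs d ≤
        Real.exp (d * m + 4 * d * Real.log (m + d) - Real.log 2 / 2 * d ^ 2)) ∧
    Tendsto (fun d : ℕ => (numHalfSquareDAGs d m : ℝ) / numDAGs d) atTop (nhds 0) := by
  have ratio_le (d : ℕ) (hd : m ≤ d) : (numHalfSquareDAGs d m : ℝ) / numDAGs d ≤
      Real.exp (d * m + 4 * d * Real.log (m + d) - Real.log 2 / 2 * d ^ 2) := calc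
    _ ≤ ((d + m : ℝ) ^ (d + m) * 2 ^ (d * m)) / 2 ^ d.choose 2 := by
      gcongr
      · exact_mod_cast numHalfSquareDAGs_le d m
      · exact_mod_cast two_pow_choose_two_le_numDAGs d
    _ ≤ _ := pow_mul_two_pow_div_two_pow_choose_le_exp hm hd
  have exponent_tendsto := (tendsto_mul_add_mul_log_sub_sq_atBot m 4
    (half_pos (Real.log_pos one_lt_two))).comp tendsto_natCast_atTop_atTop
  refine ⟨ratio_le, tendsto_of_tendsto_of_tendsto_of_le_of_le' tendsto_const_nhds
    (Real.tendsto_exp_atBot.comp exponent_tendsto) (Eventually.of_forall fun d => by positivity) ?_⟩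
  filter_upwards [eventually_ge_atTop m] with d hd using ratio_le d hd
end

section
/- Let U_1, ..., U_m be independent random subsets of [d], where each element i ∈ [d] belongs to each U_k independently with probability p ∈ (0,1). For any two fixed distinct subsets S_1 ≠ S_2 of [m], the probability that the symmetric difference (⋃_{j∈S_1} U_j) △ (⋃_{j'∈S_2} U_{j'}) has at most one element is at most (1 + d/(1 − p(1−p)^m)) · (1 − p(1−p)^m)^d. -/
open Finset
open scoped symmDiff Classical

private lemma sum_pi_prod {n : ℕ} {V : Type*} [Fintype V] (g : Fin n → V → ℝ) :
    ∑ ω : Fin n → V, ∏ i, g i (ω i) = ∏ i, ∑ v, g i v := by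
  classical
  rw [Finset.prod_univ_sum]
  simp

private lemma ite_forall_prod {n : ℕ} {V : Type*} [Fintype V] (Q : Fin n → V → Prop)
    (W : V → ℝ) (ω : Fin n → V) [Decidable (∀ i, Q i (ω i))] [∀ i, Decidable (Q i (ω i))] :
    (if (∀ i, Q i (ω i)) then ∏ i, W (ω i) else 0) = ∏ i, (if Q i (ω i) then W (ω i) else 0) := by
  classical
  by_cases h : ∀ i, Q i (ω i)
  · rw [if_pos h]
    exact Finset.prod_congr rfl fun i _ => (if_pos (h i)).symm
  · rw [if_neg h, eq_comm]
    push_neg at h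
    obtain ⟨i, hi⟩ := h
    exact Finset.prod_eq_zero (mem_univ i) (if_neg hi)

/-- Probability of an event `E` on the finite sample space `Fin d → Fin m → Bool` of
membership indicators of `m` random subsets `U_1, …, U_m` of `[d]`, where each element
belongs to each subset independently with probability `p` (product of Bernoulli weights). -/
noncomputable def randomSubsetsProb (d m : ℕ) (p : ℝ) (E : (Fin d → Fin m → Bool) → Prop) : ℝ :=
  ∑ ω : Fin d → Fin m → Bool, if E ω then ∏ i, ∏ k, (if ω i k then p else 1 - p) else 0

set_option maxHeartbeats 1000000 in
/-- Let `U_1, …, U_m` be independent random subsets of `[d]`, each element belonging to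
each subset independently with probability `p ∈ (0,1)`.  For fixed distinct `S₁ ≠ S₂ ⊆ [m]`,
the probability that `(⋃_{j∈S₁} U_j) △ (⋃_{j∈S₂} U_j)` has at most one element is at most
`(1 + d/(1 − p(1−p)^m)) · (1 − p(1−p)^m)^d`. -/
theorem prob_symmDiff_small_le {d m : ℕ} {p : ℝ} (hp0 : 0 < p) (hp1 : p < 1)
    (S₁ S₂ : Finset (Fin m)) (hS : S₁ ≠ S₂) :
    randomSubsetsProb d m p (fun ω =>
        ((univ.filter fun i : Fin d => ∃ j ∈ S₁, ω i j = true) ∆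
          (univ.filter fun i : Fin d => ∃ j ∈ S₂, ω i j = true)).card ≤ 1) ≤
      (1 + d / (1 - p * (1 - p) ^ m)) * (1 - p * (1 - p) ^ m) ^ d := by
  classical
  set q0 : ℝ := p * (1 - p) ^ m with hq0def
  have h1p : (0 : ℝ) < 1 - p := by linarith
  have hq0pos : 0 < q0 := by positivity
  have hq0lt1 : q0 < 1 := by
    have h1 : (1 - p) ^ m ≤ 1 := pow_le_one₀ (le_of_lt h1p) (by linarith)
    nlinarith
  set W : (Fin m → Bool) → ℝ := fun v => ∏ k, if v k then p else 1 - p with hW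
  have hWnn : ∀ v, 0 ≤ W v := fun v =>
    Finset.prod_nonneg fun k _ => by split <;> linarith
  set F : (Fin m → Bool) → Prop :=
    fun v => ¬((∃ j ∈ S₁, v j = true) ↔ (∃ j ∈ S₂, v j = true)) with hF
  set q : ℝ := ∑ v : Fin m → Bool, if F v then W v else 0 with hq
  set s : ℝ := ∑ v : Fin m → Bool, if ¬ F v then W v else 0 with hs
  have hWsum : ∑ v : Fin m → Bool, W v = 1 := by
    simp only [hW]
    rw [sum_pi_prod (fun _ b => if b = true then p else 1 - p)]
    simp
  have hqs : q + s = 1 := by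
    rw [hq, hs, ← Finset.sum_add_distrib, ← hWsum]
    refine Finset.sum_congr rfl fun v _ => ?_
    by_cases h : F v
    · rw [if_pos h, if_neg (not_not_intro h), add_zero]
    · rw [if_neg h, if_pos h, zero_add]
  have hqnn : 0 ≤ q := Finset.sum_nonneg fun v _ => by
    split
    exacts [hWnn v, le_rfl]
  have hsnn : 0 ≤ s := Finset.sum_nonneg fun v _ => by
    split
    exacts [hWnn v, le_rfl]
  have hq1 : q ≤ 1 := by linarith
  -- q0 ≤ q
  have hk0 : ∃ k0 : Fin m, ¬(k0 ∈ S₁ ↔ k0 ∈ S₂) := by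
    by_contra h
    push_neg at h
    exact hS (Finset.ext fun k => h k)
  obtain ⟨k0, hk0⟩ := hk0
  set v0 : Fin m → Bool := fun j => decide (j = k0) with hv0def
  have hv0mem : ∀ S : Finset (Fin m), (∃ j ∈ S, v0 j = true) ↔ k0 ∈ S := by
    intro S
    constructor
    · rintro ⟨j, hj, hvj⟩
      simp only [hv0def, decide_eq_true_eq] at hvj
      subst hvj; exact hj
    · intro h; exact ⟨k0, h, by simp [hv0def]⟩
  have hv0 : F v0 := by
    simp only [hF]
    rw [hv0mem S₁, hv0mem S₂]
    exact hk0
  have hWv0 : W v0 = p * (1 - p) ^ (m - 1) := by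
    rw [hW]
    dsimp only
    rw [← Finset.mul_prod_erase univ _ (mem_univ k0)]
    have h1 : (if v0 k0 then p else 1 - p) = p := by simp [hv0def]
    have h2 : ∏ j ∈ univ.erase k0, (if v0 j then p else 1 - p)
        = ∏ j ∈ univ.erase k0, (1 - p) := by
      refine Finset.prod_congr rfl fun j hj => ?_
      have : j ≠ k0 := (Finset.mem_erase.mp hj).1
      simp [hv0def, this]
    rw [h1, h2, Finset.prod_const, Finset.card_erase_of_mem (mem_univ k0)]
    simp
  have hq0q : q0 ≤ q := by
    have hle : q0 ≤ W v0 := by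
      rw [hWv0, hq0def]
      have : (1 - p) ^ m ≤ (1 - p) ^ (m - 1) :=
        pow_le_pow_of_le_one (le_of_lt h1p) (by linarith) (Nat.sub_le m 1)
      nlinarith
    refine hle.trans ?_
    rw [hq]
    calc W v0 = (if F v0 then W v0 else 0) := (if_pos hv0).symm
      _ ≤ ∑ v : Fin m → Bool, if F v then W v else 0 :=
        Finset.single_le_sum
          (fun v _ => by show (0:ℝ) ≤ if F v then W v else 0; split; exacts [hWnn v, le_rfl])
          (Finset.mem_univ v0)
  have hs_le : s ≤ 1 - q0 := by linarith
  have h1q0 : (0:ℝ) < 1 - q0 := by linarith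
  -- the set of "bad" coordinates
  set T : (Fin d → Fin m → Bool) → Finset (Fin d) :=
    fun ω => univ.filter (fun i => F (ω i)) with hT
  have hEvent : ∀ ω : Fin d → Fin m → Bool,
      ((univ.filter fun i : Fin d => ∃ j ∈ S₁, ω i j = true) ∆
        (univ.filter fun i : Fin d => ∃ j ∈ S₂, ω i j = true)) = T ω := by
    intro ω
    ext i
    simp only [hT, hF, Finset.mem_symmDiff, Finset.mem_filter, Finset.mem_univ, true_and]
    by_cases h1 : (∃ j ∈ S₁, ω i j = true) <;> by_cases h2 : (∃ j ∈ S₂, ω i j = true) <;>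
      simp [h1, h2]
  have hw : ∀ ω : Fin d → Fin m → Bool,
      (∏ i, ∏ k, (if ω i k then p else 1 - p)) = ∏ i, W (ω i) := fun ω => rfl
  have hwnn : ∀ ω : Fin d → Fin m → Bool, 0 ≤ ∏ i, W (ω i) :=
    fun ω => Finset.prod_nonneg fun i _ => hWnn (ω i)
  -- empty-set probability
  have hPempty : (∑ ω : Fin d → Fin m → Bool, if T ω = ∅ then ∏ i, W (ω i) else 0) = s ^ d := by
    have hcond : ∀ ω : Fin d → Fin m → Bool, (T ω = ∅) ↔ ∀ i, ¬ F (ω i) := by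
      intro ω
      rw [hT]
      simp [Finset.filter_eq_empty_iff]
    calc (∑ ω : Fin d → Fin m → Bool, if T ω = ∅ then ∏ i, W (ω i) else 0)
        = ∑ ω : Fin d → Fin m → Bool, ∏ i, (if ¬ F (ω i) then W (ω i) else 0) := by
          refine Finset.sum_congr rfl fun ω _ => ?_
          rw [if_congr (hcond ω) rfl rfl]
          exact ite_forall_prod (fun _ v => ¬ F v) W ω
      _ = ∏ i : Fin d, ∑ v : Fin m → Bool, (if ¬ F v then W v else 0) :=
          sum_pi_prod (fun _ v => if ¬ F v then W v else 0)
      _ = s ^ d := by rw [← hs, Finset.prod_const, Finset.card_univ, Fintype.card_fin]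
  -- singleton probability
  have hPsingle : ∀ i0 : Fin d,
      (∑ ω : Fin d → Fin m → Bool, if T ω = {i0} then ∏ i, W (ω i) else 0)
        = q * s ^ (d - 1) := by
    intro i0
    have hcond : ∀ ω : Fin d → Fin m → Bool, (T ω = {i0}) ↔ ∀ i, (F (ω i) ↔ i = i0) := by
      intro ω
      rw [hT, Finset.ext_iff]
      simp
    calc (∑ ω : Fin d → Fin m → Bool, if T ω = {i0} then ∏ i, W (ω i) else 0)
        = ∑ ω : Fin d → Fin m → Bool, ∏ i, (if (F (ω i) ↔ i = i0) then W (ω i) else 0) := by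
          refine Finset.sum_congr rfl fun ω _ => ?_
          rw [if_congr (hcond ω) rfl rfl]
          exact ite_forall_prod (fun i v => F v ↔ i = i0) W ω
      _ = ∏ i : Fin d, ∑ v : Fin m → Bool, (if (F v ↔ i = i0) then W v else 0) :=
          sum_pi_prod (fun i v => if F v ↔ i = i0 then W v else 0)
      _ = q * s ^ (d - 1) := by
          rw [← Finset.mul_prod_erase univ _ (mem_univ i0)]
          have h1 : (∑ v : Fin m → Bool, if (F v ↔ i0 = i0) then W v else 0) = q := by
            rw [hq]; simp
          have h2 : ∏ i ∈ univ.erase i0,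
              (∑ v : Fin m → Bool, if (F v ↔ i = i0) then W v else 0)
              = s ^ (d - 1) := by
            have : ∀ i ∈ univ.erase i0,
                (∑ v : Fin m → Bool, if (F v ↔ i = i0) then W v else 0) = s := by
              intro i hi
              have hne : i ≠ i0 := (Finset.mem_erase.mp hi).1
              rw [hs]
              refine Finset.sum_congr rfl fun v _ => ?_
              have : (F v ↔ i = i0) ↔ ¬ F v := by simp [hne]
              rw [if_congr this rfl rfl]
            rw [Finset.prod_congr rfl this, Finset.prod_const,
              Finset.card_erase_of_mem (mem_univ i0), Finset.card_univ, Fintype.card_fin]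
          rw [h1, h2]
  -- main inequality
  have step : ∀ (c : Prop) [Decidable c] (ω : Fin d → Fin m → Bool),
      (c ↔ (T ω).card ≤ 1) →
      (if c then ∏ i, W (ω i) else 0)
        ≤ (if T ω = ∅ then ∏ i, W (ω i) else 0)
          + ∑ i0 : Fin d, (if T ω = {i0} then ∏ i, W (ω i) else 0) := by
    intro c _ ω hc
    have hnn2 : (0:ℝ) ≤ (if T ω = ∅ then ∏ i, W (ω i) else 0) := by
      split; exacts [hwnn ω, le_rfl]
    have hnn3 : (0:ℝ) ≤ ∑ i0 : Fin d, (if T ω = {i0} then ∏ i, W (ω i) else 0) :=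
      Finset.sum_nonneg fun i0 _ => by
        show (0:ℝ) ≤ if T ω = {i0} then ∏ i, W (ω i) else 0
        split; exacts [hwnn ω, le_rfl]
    by_cases hE : c
    · rw [if_pos hE]
      rw [hc] at hE
      rcases Nat.le_one_iff_eq_zero_or_eq_one.mp hE with h0 | h1
      · rw [Finset.card_eq_zero] at h0
        rw [if_pos h0] at hnn2 ⊢
        linarith
      · rw [Finset.card_eq_one] at h1
        obtain ⟨i0, hi0⟩ := h1
        have hge : (if T ω = {i0} then ∏ i, W (ω i) else 0)
            ≤ ∑ i0' : Fin d, (if T ω = {i0'} then ∏ i, W (ω i) else 0) :=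
          Finset.single_le_sum (fun i0' _ => by
            show (0:ℝ) ≤ if T ω = {i0'} then ∏ i, W (ω i) else 0
            split; exacts [hwnn ω, le_rfl]) (Finset.mem_univ i0)
        rw [if_pos hi0] at hge
        linarith
    · rw [if_neg hE]
      linarith
  have hmain : randomSubsetsProb d m p (fun ω =>
        ((univ.filter fun i : Fin d => ∃ j ∈ S₁, ω i j = true) ∆
          (univ.filter fun i : Fin d => ∃ j ∈ S₂, ω i j = true)).card ≤ 1)
      ≤ s ^ d + d * (q * s ^ (d - 1)) := by
    rw [randomSubsetsProb]
    simp only [hw]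
    refine le_trans (Finset.sum_le_sum fun ω _ => step _ ω (by rw [hEvent ω])) ?_
    rw [Finset.sum_add_distrib, Finset.sum_comm, hPempty,
      Finset.sum_congr rfl fun i0 _ => hPsingle i0, Finset.sum_const,
      Finset.card_univ, Fintype.card_fin, nsmul_eq_mul]
  refine hmain.trans ?_
  have hbound : s ^ d + d * (q * s ^ (d - 1)) ≤ (1 - q0) ^ d + d * (1 - q0) ^ (d - 1) := by
    have h1 : s ^ d ≤ (1 - q0) ^ d := pow_le_pow_left₀ hsnn hs_le d
    have h2 : s ^ (d - 1) ≤ (1 - q0) ^ (d - 1) := pow_le_pow_left₀ hsnn hs_le (d - 1)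
    have h3 : q * s ^ (d - 1) ≤ (1 - q0) ^ (d - 1) := by
      have hsp : 0 ≤ s ^ (d-1) := pow_nonneg hsnn _
      nlinarith
    have hd : (0:ℝ) ≤ (d:ℝ) := Nat.cast_nonneg d
    nlinarith
  refine hbound.trans ?_
  have h10 : (1:ℝ) - q0 ≠ 0 := ne_of_gt h1q0
  rcases Nat.eq_zero_or_pos d with hd0 | hdpos
  · subst hd0; simp
  · obtain ⟨e, rfl⟩ : ∃ e, d = e + 1 := ⟨d - 1, (Nat.succ_pred_eq_of_pos hdpos).symm⟩
    have : (1 + (↑(e+1)) / (1 - q0)) * (1 - q0) ^ (e+1)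
        = (1 - q0) ^ (e+1) + (↑(e+1)) * (1 - q0) ^ e := by
      field_simp
      ring
    rw [this]
    simp
end

section
/- Let U ∈ {0,1}^{d×m} and V ∈ {0,1}^{m×d} be binary matrices such that (i) for all distinct x_1, x_2 ∈ {0,1}^m, the Boolean products U ⋄ x_1 and U ⋄ x_2 differ in Hamming distance at least 2, and (ii) every pattern x ∈ {0,1}^m appears at least twice among the columns of V. Then A = U ⋄ V has exactly 2^m distinct columns and Boolean rank exactly m, and flipping any single entry of A yields a matrix with Boolean rank exactly m+1. -/
open Finset
open scoped Classical

/-- The Boolean product of `U` with a pattern `x`. -/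
def prodCol {d m : ℕ} (U : Fin d → Fin m → Bool) (x : Fin m → Bool) : Fin d → Bool :=
  fun i => decide (∃ k, U i k = true ∧ x k = true)

/-- A matrix with an `r`-factorization has at most `2 ^ r` distinct columns. -/
lemma col_card_le_pow {d n r : ℕ} (A : Fin d → Fin n → Bool)
    (U : Fin d → Fin r → Bool) (V : Fin r → Fin n → Bool)
    (h : ∀ i j, A i j = decide (∃ k, U i k = true ∧ V k j = true)) :
    (univ.image fun j : Fin n => fun i : Fin d => A i j).card ≤ 2 ^ r := by
  classical
  have hsub : (univ.image fun j : Fin n => fun i : Fin d => A i j) ⊆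
      univ.image (prodCol U) := by
    intro c hc
    simp only [mem_image, mem_univ, true_and] at hc ⊢
    obtain ⟨j, rfl⟩ := hc
    exact ⟨fun k => V k j, by funext i; exact (h i j).symm⟩
  calc (univ.image fun j : Fin n => fun i : Fin d => A i j).card
      ≤ (univ.image (prodCol U)).card := card_le_card hsub
    _ ≤ (univ : Finset (Fin r → Bool)).card := card_image_le
    _ = 2 ^ r := by simp [card_univ]

/-- The Boolean rank of a binary matrix `A : Fin d → Fin n → Bool` is the smallest `r`
such that `A` factors as a Boolean product of a `d × r` and an `r × n` binary matrix. -/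
noncomputable def boolRank {d n : ℕ} (A : Fin d → Fin n → Bool) : ℕ :=
  sInf {r : ℕ | ∃ (U : Fin d → Fin r → Bool) (V : Fin r → Fin n → Bool),
    ∀ i j, A i j = decide (∃ k, U i k = true ∧ V k j = true)}

/-- Suppose `U ∈ {0,1}^{d×m}` and `V ∈ {0,1}^{m×d}` satisfy:
(i) non-overlap: distinct `x₁, x₂ ∈ {0,1}^m` give Boolean products `U ⋄ x₁`, `U ⋄ x₂`
at Hamming distance at least 2; and
(ii) coverage: every pattern `x ∈ {0,1}^m` appears at least twice among the columns of `V`.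
Then the Boolean product `A = U ⋄ V` has exactly `2^m` distinct columns and Boolean rank
exactly `m`, and flipping any single entry of `A` yields a matrix of Boolean rank `m + 1`. -/
theorem boolRank_increase_of_flip {d m : ℕ}
    (U : Fin d → Fin m → Bool) (V : Fin m → Fin d → Bool)
    (hU : ∀ x₁ x₂ : Fin m → Bool, x₁ ≠ x₂ →
      2 ≤ (univ.filter fun i : Fin d =>
        decide (∃ k, U i k = true ∧ x₁ k = true) ≠
        decide (∃ k, U i k = true ∧ x₂ k = true)).card)
    (hV : ∀ x : Fin m → Bool, ∃ j₁ j₂ : Fin d, j₁ ≠ j₂ ∧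
      (∀ k, V k j₁ = x k) ∧ (∀ k, V k j₂ = x k)) :
    (univ.image fun j : Fin d =>
        fun i : Fin d => decide (∃ k, U i k = true ∧ V k j = true)).card = 2 ^ m ∧
    boolRank (fun i j => decide (∃ k, U i k = true ∧ V k j = true)) = m ∧
    ∀ i₀ j₀ : Fin d,
      boolRank (fun i j =>
        if i = i₀ ∧ j = j₀ then ! decide (∃ k, U i k = true ∧ V k j = true)
        else decide (∃ k, U i k = true ∧ V k j = true)) = m + 1 := by
  classical
  -- injectivity of `prodCol U`
  have hinj : Function.Injective (prodCol U) := by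
    intro x₁ x₂ hx
    by_contra hne
    have h2 := hU x₁ x₂ hne
    have hempty : (univ.filter fun i : Fin d =>
        decide (∃ k, U i k = true ∧ x₁ k = true) ≠
        decide (∃ k, U i k = true ∧ x₂ k = true)) = ∅ := by
      apply filter_eq_empty_iff.mpr
      intro i _
      exact not_not_intro (congrFun hx i)
    rw [hempty] at h2
    simp at h2
  -- columns of `A` are exactly the `prodCol U x`
  have himg : (univ.image fun j : Fin d => fun i : Fin d =>
      decide (∃ k, U i k = true ∧ V k j = true)) = univ.image (prodCol U) := by
    ext c
    simp only [mem_image, mem_univ, true_and]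
    constructor
    · rintro ⟨j, rfl⟩
      exact ⟨fun k => V k j, rfl⟩
    · rintro ⟨x, rfl⟩
      obtain ⟨j₁, j₂, hne, h1, h2⟩ := hV x
      refine ⟨j₁, ?_⟩
      have hx : (fun k => V k j₁) = x := funext h1
      show prodCol U (fun k => V k j₁) = prodCol U x
      rw [hx]
  have hcard : (univ.image fun j : Fin d => fun i : Fin d =>
      decide (∃ k, U i k = true ∧ V k j = true)).card = 2 ^ m := by
    rw [himg, card_image_of_injective _ hinj, card_univ]
    simp
  refine ⟨hcard, ?_, ?_⟩
  · -- boolRank A = m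
    refine le_antisymm (Nat.sInf_le ⟨U, V, fun i j => rfl⟩) ?_
    refine le_csInf ⟨m, U, V, fun i j => rfl⟩ ?_
    rintro r ⟨U', V', hUV⟩
    have hle := col_card_le_pow
      (fun i j => decide (∃ k, U i k = true ∧ V k j = true)) U' V' hUV
    have h2 : (2 : ℕ) ^ m ≤ 2 ^ r := le_trans (le_of_eq hcard.symm) hle
    exact (Nat.pow_le_pow_iff_right (by norm_num)).mp h2
  · -- the flipped matrix
    intro i₀ j₀
    set B : Fin d → Fin d → Bool := fun i j =>
      if i = i₀ ∧ j = j₀ then ! decide (∃ k, U i k = true ∧ V k j = true)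
      else decide (∃ k, U i k = true ∧ V k j = true) with hB
    set x₀ : Fin m → Bool := fun k => V k j₀ with hx₀
    set c₀ : Fin d → Bool := fun i =>
      if i = i₀ then ! prodCol U x₀ i else prodCol U x₀ i with hc₀
    -- the flipped column
    have hcol₀ : (fun i => B i j₀) = c₀ := by
      funext i
      by_cases hi : i = i₀ <;> simp [hB, hc₀, hi, prodCol, hx₀]
    -- columns of B for j ≠ j₀
    have hcolne : ∀ (j : Fin d) (x : Fin m → Bool), j ≠ j₀ → (∀ k, V k j = x k) →
        (fun i => B i j) = prodCol U x := by
      intro j x hj hx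
      funext i
      have hvx : (fun k => V k j) = x := funext hx
      have : B i j = decide (∃ k, U i k = true ∧ V k j = true) := by
        simp [hB, hj]
      rw [this]
      show prodCol U (fun k => V k j) i = prodCol U x i
      rw [hvx]
    -- c₀ is not among the products
    have hnot : c₀ ∉ univ.image (prodCol U) := by
      intro hmem
      obtain ⟨x, -, hx⟩ := mem_image.mp hmem
      by_cases hxx : x = x₀
      · subst hxx
        have := congrFun hx i₀
        simp [hc₀] at this
      · have h2 := hU x x₀ hxx
        have hsub1 : (univ.filter fun i : Fin d =>
            decide (∃ k, U i k = true ∧ x k = true) ≠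
            decide (∃ k, U i k = true ∧ x₀ k = true)) ⊆ {i₀} := by
          intro i hi
          simp only [mem_filter, mem_univ, true_and] at hi
          simp only [mem_singleton]
          by_contra hii
          apply hi
          have h1 := congrFun hx i
          simp [hc₀, hii] at h1
          exact h1
        have := card_le_card hsub1
        simp only [card_singleton] at this
        omega
    -- lower bound on number of columns of B
    have hBcols : 2 ^ m + 1 ≤ (univ.image fun j : Fin d => fun i : Fin d => B i j).card := by
      have hsub : insert c₀ (univ.image (prodCol U)) ⊆
          univ.image fun j : Fin d => fun i : Fin d => B i j := by
        intro c hc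
        rw [mem_insert] at hc
        simp only [mem_image, mem_univ, true_and]
        rcases hc with rfl | hc
        · exact ⟨j₀, hcol₀⟩
        · obtain ⟨x, -, rfl⟩ := mem_image.mp hc
          obtain ⟨j₁, j₂, hne, h1, h2⟩ := hV x
          by_cases hj1 : j₁ = j₀
          · refine ⟨j₂, hcolne j₂ x ?_ h2⟩
            rintro rfl; exact hne hj1
          · exact ⟨j₁, hcolne j₁ x hj1 h1⟩
      have hc1 := card_le_card hsub
      rwa [card_insert_of_notMem hnot, card_image_of_injective _ hinj, card_univ,
        Fintype.card_fun, Fintype.card_bool, Fintype.card_fin] at hc1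
    -- upper bound: explicit (m+1)-factorization of B
    have hmem : ∃ (U' : Fin d → Fin (m + 1) → Bool) (V' : Fin (m + 1) → Fin d → Bool),
        ∀ i j, B i j = decide (∃ k, U' i k = true ∧ V' k j = true) := by
      refine ⟨fun i k => if h : (k : ℕ) < m then U i ⟨k, h⟩ else B i j₀,
        fun k j => if h : (k : ℕ) < m then (decide (j ≠ j₀) && V ⟨k, h⟩ j)
          else decide (j = j₀), ?_⟩
      intro i j
      by_cases hj : j = j₀
      · subst hj
        have hiff : (∃ k : Fin (m + 1),
            (if h : (k : ℕ) < m then U i ⟨k, h⟩ else B i j) = true ∧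
            (if h : (k : ℕ) < m then (decide (j ≠ j) && V ⟨k, h⟩ j)
              else decide (j = j)) = true) ↔ B i j = true := by
          constructor
          · rintro ⟨k, hk1, hk2⟩
            by_cases h : (k : ℕ) < m
            · simp [h] at hk2
            · simpa [h] using hk1
          · intro hb
            refine ⟨Fin.last m, ?_, ?_⟩
            · simpa [Fin.last] using hb
            · simp [Fin.last]
        calc B i j = decide (B i j = true) := by simp
          _ = _ := by rw [decide_eq_decide]; exact hiff.symm
      · have hBij : B i j = decide (∃ k, U i k = true ∧ V k j = true) := by
          simp [hB, hj]
        rw [hBij, decide_eq_decide]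
        constructor
        · rintro ⟨k, hk1, hk2⟩
          refine ⟨⟨(k : ℕ), by omega⟩, ?_, ?_⟩
          · simpa [k.isLt] using hk1
          · simp [k.isLt, hj, hk2]
        · rintro ⟨k, hk1, hk2⟩
          by_cases h : (k : ℕ) < m
          · simp only [dif_pos h] at hk1 hk2
            simp only [Bool.and_eq_true] at hk2
            exact ⟨⟨(k : ℕ), h⟩, hk1, hk2.2⟩
          · simp [h, hj] at hk2
    obtain ⟨U', V', hUV'⟩ := hmem
    refine le_antisymm (Nat.sInf_le ⟨U', V', hUV'⟩) ?_
    refine le_csInf ⟨m + 1, U', V', hUV'⟩ ?_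
    rintro r ⟨U'', V'', hUV''⟩
    have hle := col_card_le_pow B U'' V'' hUV''
    have h2 : 2 ^ m + 1 ≤ 2 ^ r := le_trans hBcols hle
    by_contra hlt
    push_neg at hlt
    have : (2 : ℕ) ^ r ≤ 2 ^ m := Nat.pow_le_pow_right (by norm_num) (by omega)
    omega
end
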